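/- arXiv:0803.2605 — 2 statements merged into one kernel-verified Lean document; each statement's English description precedes it below -/
import Mathlib

section
/- Let R ⊆ S be commutative rings and F a bounded chain complex of finitely generated free R-modules such that F ⊗_R S is exact. Then choosing S-linear splittings of the boundary exact sequences yields an S-module isomorphism (⊕_j F_{2j}) ⊗_R S ≅ (⊕_j F_{2j+1}) ⊗_R S, and its determinant, as an element of S^×/R^×, is independent of the choice of splittings. -/
/-!
Besides `A_s = s + d : ⊕ F_{2j} ⊗ S → ⊕ F_{2j+1} ⊗ S`, consider `B_t = d + t` in the opposite
direction. For splittings `s, t` the composite `B_t ∘ A_s` is block lower triangular with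
diagonal blocks `1 + (t - s) ∘ d`; by `det (1 + g f) = det (1 + f g)` and `d (t - s) = (s - t) d`
one degree lower, each of them has determinant `1`. Likewise `A_s ∘ B_s` is unipotent lower
triangular, because `F` vanishes in degree `2(n + 1)`. Hence `A_s` is bijective, and
`B_{s'} A_s = (B_{s'} A_{s'}) (A_{s'}⁻¹ A_s)` gives `det (A_{s'}⁻¹ A_s) = 1`.
Splittings exist because, by exactness and projectivity, `1 - s_i d_i` lifts through `d_{i+1}`.
-/

noncomputable section

variable {R : Type*} [CommRing R] (S : Type*) [CommRing S] [Algebra R S]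
variable (F : ℕ → Type*) [∀ i, AddCommGroup (F i)] [∀ i, Module R (F i)]

/-- Transport along an equality of indices. -/
def tcast {a b : ℕ} (h : a = b) :
    TensorProduct R S (F a) ≃ₗ[S] TensorProduct R S (F b) := by
  subst h; exact LinearEquiv.refl _ _

variable (d : ∀ i, F (i + 1) →ₗ[R] F i)

/-- `s` is a (family of) `S`-linear splittings of the base-changed complex `F ⊗_R S`,
expressed as a contracting homotopy: `d∘s = 1` in degree `0` and `d∘s + s∘d = 1` in
positive degrees.  Such data is precisely a choice of splittings of the exact sequences
`0 → Z_i → F_i ⊗ S → B_{i−1} → 0` (together with `B_i = Z_i`). -/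
def IsSplitting (s : ∀ i, TensorProduct R S (F i) →ₗ[S] TensorProduct R S (F (i + 1))) :
    Prop :=
  (LinearMap.baseChange S (d 0)) ∘ₗ s 0 = LinearMap.id ∧
  ∀ i, (LinearMap.baseChange S (d (i + 1))) ∘ₗ s (i + 1)
        + s i ∘ₗ (LinearMap.baseChange S (d i)) = LinearMap.id

/-- The map `⊕_j F_{2j} ⊗ S → ⊕_j F_{2j+1} ⊗ S` assembled from the differentials and
the chosen splittings `s`: in the `j`-th coordinate it is `s_{2j} + d_{2j+1}`. -/
def assembledMap (m : ℕ)
    (s : ∀ i, TensorProduct R S (F i) →ₗ[S] TensorProduct R S (F (i + 1))) :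
    (∀ j : Fin m, TensorProduct R S (F (2 * (j : ℕ))))
      →ₗ[S] ∀ j : Fin m, TensorProduct R S (F (2 * (j : ℕ) + 1)) :=
  LinearMap.pi fun j =>
    s (2 * (j : ℕ)) ∘ₗ LinearMap.proj j
      + (if h : (j : ℕ) + 1 < m then
          (LinearMap.baseChange S (d (2 * (j : ℕ) + 1))) ∘ₗ
            (tcast S F (by omega : 2 * ((j : ℕ) + 1)
                = 2 * (j : ℕ) + 1 + 1)).toLinearMap ∘ₗ
            LinearMap.proj (⟨(j : ℕ) + 1, h⟩ : Fin m)
        else 0)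

open TensorProduct

theorem LinearMap.det_id_add_comp_comm {A V W : Type*} [CommRing A] [AddCommGroup V]
    [Module A V] [AddCommGroup W] [Module A W] [Module.Finite A V] [Module.Free A V]
    [Module.Finite A W] [Module.Free A W] (f : V →ₗ[A] W) (g : W →ₗ[A] V) :
    LinearMap.det (LinearMap.id + g ∘ₗ f) = LinearMap.det (LinearMap.id + f ∘ₗ g) := by
  classical
  let bV := Module.Free.chooseBasis A V
  let bW := Module.Free.chooseBasis A W
  rw [← LinearMap.det_toMatrix bV, ← LinearMap.det_toMatrix bW, map_add, map_add,
    LinearMap.toMatrix_id, LinearMap.toMatrix_id, LinearMap.toMatrix_comp bV bW bV g f,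
    LinearMap.toMatrix_comp bW bV bW f g]
  exact Matrix.det_one_add_mul_comm _ _

theorem LinearMap.bijective_of_det_eq_one {A V : Type*} [CommRing A] [AddCommGroup V]
    [Module A V] [Module.Finite A V] [Module.Free A V] {T : V →ₗ[A] V}
    (hT : LinearMap.det T = 1) : Function.Bijective T :=
  (Module.End.isUnit_iff T).1 ((LinearMap.isUnit_iff_isUnit_det T).2 (hT ▸ isUnit_one))

theorem LinearMap.det_pi_eq_prod_of_lowerTriangular {A ι : Type*} [CommRing A] [Fintype ι]
    [LinearOrder ι] {φ : ι → Type*} [∀ i, AddCommGroup (φ i)] [∀ i, Module A (φ i)]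
    [∀ i, Module.Finite A (φ i)] [∀ i, Module.Free A (φ i)]
    (T : (∀ i, φ i) →ₗ[A] ∀ i, φ i) (D : ∀ i, φ i →ₗ[A] φ i)
    (hT : ∀ i z, (∀ j < i, z j = 0) → T z i = D i (z i)) :
    LinearMap.det T = ∏ i, LinearMap.det (D i) := by
  classical
  let b i := Module.Free.chooseBasis A (φ i)
  have hentry : ∀ i j (p : Module.Free.ChooseBasisIndex A (φ i)) q, i ≤ j →
      LinearMap.toMatrix (Pi.basis b) (Pi.basis b) T ⟨i, p⟩ ⟨j, q⟩
        = (b i).repr (D i (Pi.single j (b j q) i)) p := fun i j p q hij => by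
    rw [LinearMap.toMatrix_apply, Pi.basis_apply, Pi.basis_repr,
      hT i _ fun k hk => Pi.single_eq_of_ne (hk.trans_le hij).ne _]
  have htri : (LinearMap.toMatrix (Pi.basis b) (Pi.basis b) T).transpose.BlockTriangular
      Sigma.fst := by
    rintro ⟨i, p⟩ ⟨j, q⟩ (hji : j < i)
    rw [Matrix.transpose_apply, hentry _ _ _ _ hji.le, Pi.single_eq_of_ne hji.ne, map_zero,
      map_zero, Finsupp.zero_apply]
  have hblock : ∀ i, ((LinearMap.toMatrix (Pi.basis b) (Pi.basis b) T).transpose.toSquareBlock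
      Sigma.fst i).det = LinearMap.det (D i) := by
    intro i
    rw [← LinearMap.det_toMatrix (b i),
      ← Matrix.det_transpose (LinearMap.toMatrix (b i) (b i) _),
      ← Matrix.det_submatrix_equiv_self (Equiv.sigmaSubtype i).symm]
    congr 1
    ext p q
    have hiq := hentry i i q p le_rfl
    rw [Pi.single_eq_same] at hiq
    exact hiq.trans (LinearMap.toMatrix_apply _ _ _ _ _).symm
  rw [← LinearMap.det_toMatrix (Pi.basis b), ← Matrix.det_transpose, htri.det,
    Finset.prod_subset (Finset.subset_univ _) fun i _ hi => ?_]
  · exact Finset.prod_congr rfl fun i _ => hblock i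
  · have : IsEmpty {x : Σ i, Module.Free.ChooseBasisIndex A (φ i) // x.1 = i} :=
      ⟨fun x => hi (Finset.mem_image.2 ⟨x.1, Finset.mem_univ _, x.2⟩)⟩
    exact Matrix.det_isEmpty

theorem Module.projective_lifting_property_of_range_le {A P M N : Type*} [Ring A]
    [AddCommGroup P] [Module A P] [Module.Projective A P] [AddCommGroup M] [Module A M]
    [AddCommGroup N] [Module A N] (f : M →ₗ[A] N) (g : P →ₗ[A] N)
    (hfg : LinearMap.range g ≤ LinearMap.range f) : ∃ h : P →ₗ[A] M, f ∘ₗ h = g := by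
  obtain ⟨h, hh⟩ := Module.projective_lifting_property f.rangeRestrict
    (g.codRestrict _ fun x => hfg ⟨x, rfl⟩) f.surjective_rangeRestrict
  exact ⟨h, LinearMap.ext fun x => congrArg Subtype.val (LinearMap.congr_fun hh x)⟩

variable {S F}

section Existence

variable {d}

theorem exists_baseChange_comp_add_comp_eq_id [∀ i, Module.Free R (F i)]
    (hex : ∀ i, LinearMap.range ((d (i + 1)).baseChange S) = LinearMap.ker ((d i).baseChange S))
    {i : ℕ} (t : S ⊗[R] F i →ₗ[S] S ⊗[R] F (i + 1))
    (ht : (d i).baseChange S ∘ₗ t ∘ₗ (d i).baseChange S = (d i).baseChange S) :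
    ∃ t' : S ⊗[R] F (i + 1) →ₗ[S] S ⊗[R] F (i + 1 + 1),
      (d (i + 1)).baseChange S ∘ₗ t' + t ∘ₗ (d i).baseChange S = LinearMap.id := by
  obtain ⟨t', ht'⟩ := Module.projective_lifting_property_of_range_le ((d (i + 1)).baseChange S)
    (LinearMap.id - t ∘ₗ (d i).baseChange S) (by
      rw [hex, LinearMap.range_le_ker_iff, LinearMap.comp_sub, LinearMap.comp_id, ht]
      exact sub_self (G := S ⊗[R] F (i + 1) →ₗ[S] S ⊗[R] F i) _)
  exact ⟨t', by rw [ht']; exact sub_add_cancel (G := Module.End S (S ⊗[R] F (i + 1))) _ _⟩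

theorem exists_isSplitting [∀ i, Module.Free R (F i)]
    (hex0 : Function.Surjective ((d 0).baseChange S))
    (hex : ∀ i, LinearMap.range ((d (i + 1)).baseChange S) = LinearMap.ker ((d i).baseChange S)) :
    ∃ s, IsSplitting S F d s := by
  obtain ⟨s₀, hs₀⟩ := Module.projective_lifting_property _ LinearMap.id hex0
  -- The recursion carries the invariant `d ∘ t ∘ d = d`, which makes `1 - t ∘ d` liftable.
  choose next hnext using fun i (t : {t : S ⊗[R] F i →ₗ[S] S ⊗[R] F (i + 1) //
      (d i).baseChange S ∘ₗ t ∘ₗ (d i).baseChange S = (d i).baseChange S}) =>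
    exists_baseChange_comp_add_comp_eq_id hex t.1 t.2
  have hnext_inner : ∀ i t, (d (i + 1)).baseChange S ∘ₗ next i t ∘ₗ (d (i + 1)).baseChange S
      = (d (i + 1)).baseChange S := fun i t => LinearMap.ext fun x => by
    have hx := LinearMap.congr_fun (hnext i t) ((d (i + 1)).baseChange S x)
    rwa [LinearMap.add_apply, LinearMap.comp_apply, LinearMap.comp_apply,
      LinearMap.mem_ker.1 ((hex i).le (LinearMap.mem_range_self _ x)), map_zero, add_zero] at hx
  let s : ∀ i, {t : S ⊗[R] F i →ₗ[S] S ⊗[R] F (i + 1) //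
      (d i).baseChange S ∘ₗ t ∘ₗ (d i).baseChange S = (d i).baseChange S} := fun i =>
    Nat.rec ⟨s₀, by rw [← LinearMap.comp_assoc, hs₀, LinearMap.id_comp]⟩
      (fun i t => ⟨next i t, hnext_inner i t⟩) i
  exact ⟨fun i => (s i).1, hs₀, fun i => hnext i (s i)⟩

end Existence

namespace IsSplitting

variable {d} {s s' : ∀ i, S ⊗[R] F i →ₗ[S] S ⊗[R] F (i + 1)}

theorem baseChange_zero_apply (hs : IsSplitting S F d s) (x : S ⊗[R] F 0) :
    (d 0).baseChange S (s 0 x) = x :=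
  LinearMap.congr_fun hs.1 x

theorem baseChange_succ_apply_add (hs : IsSplitting S F d s) (i : ℕ) (x : S ⊗[R] F (i + 1)) :
    (d (i + 1)).baseChange S (s (i + 1) x) + s i ((d i).baseChange S x) = x :=
  LinearMap.congr_fun (hs.2 i) x

theorem baseChange_zero_comp_sub (hs : IsSplitting S F d s) (hs' : IsSplitting S F d s') :
    (d 0).baseChange S ∘ₗ (s' 0 - s 0) = 0 := LinearMap.ext fun x => by
  rw [LinearMap.comp_apply, LinearMap.sub_apply, map_sub, hs.baseChange_zero_apply,
    hs'.baseChange_zero_apply, sub_self, LinearMap.zero_apply]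

theorem baseChange_succ_comp_sub (hs : IsSplitting S F d s) (hs' : IsSplitting S F d s')
    (k : ℕ) :
    (d (k + 1)).baseChange S ∘ₗ (s' (k + 1) - s (k + 1))
      = (s k - s' k) ∘ₗ (d k).baseChange S := LinearMap.ext fun x => by
  rw [LinearMap.comp_apply, LinearMap.comp_apply, LinearMap.sub_apply, LinearMap.sub_apply,
    map_sub, eq_sub_of_add_eq (hs.baseChange_succ_apply_add k x),
    eq_sub_of_add_eq (hs'.baseChange_succ_apply_add k x)]
  abel

theorem det_id_add_sub_comp [∀ i, Module.Finite R (F i)] [∀ i, Module.Free R (F i)]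
    (hs : IsSplitting S F d s) (hs' : IsSplitting S F d s') (k : ℕ) :
    LinearMap.det (LinearMap.id + (s' k - s k) ∘ₗ (d k).baseChange S) = 1 := by
  induction k generalizing s s' with
  | zero => rw [LinearMap.det_id_add_comp_comm, hs.baseChange_zero_comp_sub hs', add_zero,
      LinearMap.det_id]
  | succ k ih =>
    -- the sign is absorbed by exchanging the roles of `s` and `s'`
    rw [LinearMap.det_id_add_comp_comm, hs.baseChange_succ_comp_sub hs' k]
    exact ih hs' hs

end IsSplitting

def assembledMapOdd (m : ℕ) (s : ∀ i, S ⊗[R] F i →ₗ[S] S ⊗[R] F (i + 1)) :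
    (∀ j : Fin m, S ⊗[R] F (2 * (j : ℕ) + 1)) →ₗ[S] ∀ j : Fin m, S ⊗[R] F (2 * (j : ℕ)) :=
  LinearMap.pi fun
    | ⟨0, h⟩ => (d 0).baseChange S ∘ₗ LinearMap.proj (⟨0, h⟩ : Fin m)
    | ⟨k + 1, h⟩ => (d (2 * (k + 1))).baseChange S ∘ₗ LinearMap.proj (⟨k + 1, h⟩ : Fin m)
        + s (2 * k + 1) ∘ₗ LinearMap.proj (⟨k, by omega⟩ : Fin m)

section Assembled

variable {d} {m : ℕ} {s s' : ∀ i, S ⊗[R] F i →ₗ[S] S ⊗[R] F (i + 1)}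

theorem assembledMapOdd_apply_zero (h : 0 < m) (y : ∀ j : Fin m, S ⊗[R] F (2 * (j : ℕ) + 1)) :
    assembledMapOdd d m s y ⟨0, h⟩ = (d 0).baseChange S (y ⟨0, h⟩) := rfl

theorem assembledMapOdd_apply_succ {k : ℕ} (h : k + 1 < m)
    (y : ∀ j : Fin m, S ⊗[R] F (2 * (j : ℕ) + 1)) :
    assembledMapOdd d m s y ⟨k + 1, h⟩
      = (d (2 * (k + 1))).baseChange S (y ⟨k + 1, h⟩) + s (2 * k + 1) (y ⟨k, by omega⟩) := rfl

theorem assembledMap_apply (x : ∀ j : Fin m, S ⊗[R] F (2 * (j : ℕ))) {j : ℕ} (hj : j < m) :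
    assembledMap S F d m s x ⟨j, hj⟩ = s (2 * j) (x ⟨j, hj⟩)
      + if h : j + 1 < m then (d (2 * j + 1)).baseChange S (x ⟨j + 1, h⟩) else 0 := by
  simp only [assembledMap, LinearMap.pi_apply, LinearMap.add_apply, LinearMap.comp_apply,
    LinearMap.proj_apply]
  split_ifs <;> rfl

variable (hdd : ∀ i x, (d i).baseChange S ((d (i + 1)).baseChange S x) = 0)
include hdd

theorem assembledMapOdd_assembledMap_apply_zero (h : 0 < m)
    (x : ∀ j : Fin m, S ⊗[R] F (2 * (j : ℕ))) :
    assembledMapOdd d m s' (assembledMap S F d m s x) ⟨0, h⟩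
      = (d 0).baseChange S (s 0 (x ⟨0, h⟩)) := by
  rw [assembledMapOdd_apply_zero, assembledMap_apply, map_add]
  split_ifs
  · rw [hdd, add_zero]
  · rw [map_zero, add_zero]

theorem assembledMapOdd_assembledMap_apply_succ {k : ℕ} (h : k + 1 < m)
    (x : ∀ j : Fin m, S ⊗[R] F (2 * (j : ℕ))) :
    assembledMapOdd d m s' (assembledMap S F d m s x) ⟨k + 1, h⟩
      = (d (2 * (k + 1))).baseChange S (s (2 * (k + 1)) (x ⟨k + 1, h⟩))
        + s' (2 * k + 1) ((d (2 * k + 1)).baseChange S (x ⟨k + 1, h⟩))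
        + s' (2 * k + 1) (s (2 * k) (x ⟨k, by omega⟩)) := by
  rw [assembledMapOdd_apply_succ, assembledMap_apply, assembledMap_apply, dif_pos h, map_add,
    map_add]
  split_ifs
  · rw [hdd, add_zero]; abel
  · rw [map_zero, add_zero]; abel

theorem assembledMap_assembledMapOdd_apply (hvanish : Subsingleton (S ⊗[R] F (2 * m)))
    (y : ∀ j : Fin m, S ⊗[R] F (2 * (j : ℕ) + 1)) {j : ℕ} (hj : j < m) :
    assembledMap S F d m s (assembledMapOdd d m s y) ⟨j, hj⟩
      = s (2 * j) (assembledMapOdd d m s y ⟨j, hj⟩)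
        + (d (2 * j + 1)).baseChange S (s (2 * j + 1) (y ⟨j, hj⟩)) := by
  rw [assembledMap_apply]
  split_ifs with h
  · rw [assembledMapOdd_apply_succ, map_add, show
      (d (2 * j + 1)).baseChange S ((d (2 * (j + 1))).baseChange S _) = 0 from hdd _ _, zero_add]
  · obtain rfl : m = j + 1 := by omega
    rw [Subsingleton.elim (s (2 * j + 1) (y ⟨j, hj⟩)) 0, map_zero]

variable [∀ i, Module.Finite R (F i)] [∀ i, Module.Free R (F i)]

theorem det_assembledMapOdd_comp_assembledMap (hs : IsSplitting S F d s)
    (hs' : IsSplitting S F d s') :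
    LinearMap.det (assembledMapOdd d m s' ∘ₗ assembledMap S F d m s) = 1 := by
  rw [LinearMap.det_pi_eq_prod_of_lowerTriangular _ fun
    | ⟨0, _⟩ => LinearMap.id
    | ⟨k + 1, _⟩ =>
      LinearMap.id + (s' (2 * k + 1) - s (2 * k + 1)) ∘ₗ (d (2 * k + 1)).baseChange S]
  · refine Finset.prod_eq_one ?_
    rintro ⟨_ | k, h⟩ -
    · exact LinearMap.det_id
    · exact hs.det_id_add_sub_comp hs' (2 * k + 1)
  · rintro ⟨_ | k, h⟩ x hx
    · rw [LinearMap.comp_apply, assembledMapOdd_assembledMap_apply_zero hdd,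
        hs.baseChange_zero_apply]
      rfl
    · rw [LinearMap.comp_apply, assembledMapOdd_assembledMap_apply_succ hdd,
        hx ⟨k, by omega⟩ (Fin.mk_lt_mk.2 k.lt_succ_self), map_zero, map_zero, add_zero]
      show _ = x ⟨k + 1, h⟩
        + (s' (2 * k + 1) - s (2 * k + 1)) ((d (2 * k + 1)).baseChange S (x ⟨k + 1, h⟩))
      have hsplit : (d (2 * (k + 1))).baseChange S (s (2 * (k + 1)) (x ⟨k + 1, h⟩))
          = x ⟨k + 1, h⟩ - s (2 * k + 1) ((d (2 * k + 1)).baseChange S (x ⟨k + 1, h⟩)) :=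
        eq_sub_of_add_eq (hs.baseChange_succ_apply_add _ _)
      rw [hsplit, LinearMap.sub_apply]
      abel

theorem det_assembledMap_comp_assembledMapOdd (hs : IsSplitting S F d s)
    (hvanish : Subsingleton (S ⊗[R] F (2 * m))) :
    LinearMap.det (assembledMap S F d m s ∘ₗ assembledMapOdd d m s) = 1 := by
  rw [LinearMap.det_pi_eq_prod_of_lowerTriangular _ fun _ => LinearMap.id]
  · simp only [LinearMap.det_id, Finset.prod_const_one]
  · rintro ⟨j, hj⟩ y hy
    rw [LinearMap.comp_apply, assembledMap_assembledMapOdd_apply hdd hvanish]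
    rcases j with _ | k
    · exact (add_comm _ _).trans (hs.baseChange_succ_apply_add 0 _)
    · rw [assembledMapOdd_apply_succ, hy ⟨k, by omega⟩ (Fin.mk_lt_mk.2 k.lt_succ_self),
        map_zero, add_zero]
      exact (add_comm _ _).trans (hs.baseChange_succ_apply_add _ _)

theorem bijective_assembledMap (hs : IsSplitting S F d s)
    (hvanish : Subsingleton (S ⊗[R] F (2 * m))) :
    Function.Bijective (assembledMap S F d m s) := by
  refine ⟨.of_comp (f := assembledMapOdd d m s) ?_, .of_comp (g := assembledMapOdd d m s) ?_⟩
  · exact (LinearMap.bijective_of_det_eq_one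
      (det_assembledMapOdd_comp_assembledMap hdd hs hs)).injective
  · exact (LinearMap.bijective_of_det_eq_one
      (det_assembledMap_comp_assembledMapOdd hdd hs hvanish)).surjective

theorem det_symm_comp_assembledMap (hs : IsSplitting S F d s) (hs' : IsSplitting S F d s')
    (e : (∀ j : Fin m, S ⊗[R] F (2 * (j : ℕ))) ≃ₗ[S] ∀ j : Fin m, S ⊗[R] F (2 * (j : ℕ) + 1))
    (he : (e : _ →ₗ[S] _) = assembledMap S F d m s') :
    LinearMap.det (e.symm.toLinearMap ∘ₗ assembledMap S F d m s) = 1 := by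
  have hfactor : assembledMapOdd d m s' ∘ₗ assembledMap S F d m s
      = (assembledMapOdd d m s' ∘ₗ assembledMap S F d m s')
        ∘ₗ (e.symm.toLinearMap ∘ₗ assembledMap S F d m s) := by
    rw [← he]
    exact LinearMap.ext fun x => by simp
  have hdet := congrArg LinearMap.det hfactor
  rwa [LinearMap.det_comp, det_assembledMapOdd_comp_assembledMap hdd hs hs',
    det_assembledMapOdd_comp_assembledMap hdd hs' hs', one_mul, eq_comm] at hdet

end Assembled

theorem stmt4 [∀ i, Module.Finite R (F i)] [∀ i, Module.Free R (F i)]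
    (n : ℕ) (hbound : ∀ i, n < i → Subsingleton (F i))
    (hex0 : Function.Surjective (LinearMap.baseChange S (d 0)))
    (hex : ∀ i, LinearMap.range (LinearMap.baseChange S (d (i + 1)))
            = LinearMap.ker (LinearMap.baseChange S (d i))) :
    (∃ s, IsSplitting S F d s) ∧
    (∀ s, IsSplitting S F d s → Function.Bijective (assembledMap S F d (n + 1) s)) ∧
    (∀ s s', IsSplitting S F d s → IsSplitting S F d s' →
      ∀ e' : (∀ j : Fin (n + 1), TensorProduct R S (F (2 * (j : ℕ))))
          ≃ₗ[S] ∀ j : Fin (n + 1), TensorProduct R S (F (2 * (j : ℕ) + 1)),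
        (e' : _ →ₗ[S] _) = assembledMap S F d (n + 1) s' →
        ∃ u : Rˣ,
          LinearMap.det (e'.symm.toLinearMap ∘ₗ assembledMap S F d (n + 1) s)
            = algebraMap R S u) := by
  have hdd : ∀ i x, (d i).baseChange S ((d (i + 1)).baseChange S x) = 0 :=
    fun i x => (hex i).le (LinearMap.mem_range_self _ x)
  have hvanish : Subsingleton (S ⊗[R] F (2 * (n + 1))) := by
    have := hbound (2 * (n + 1)) (by omega)
    infer_instance
  refine ⟨exists_isSplitting hex0 hex, fun s hs => bijective_assembledMap hdd hs hvanish,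
    fun s s' hs hs' e' he' => ⟨1, ?_⟩⟩
  rw [Units.val_one, map_one]
  exact det_symm_comp_assembledMap hdd hs hs' e' he'

end
end

section
/- Let K be a number field, S a finite set of places of K containing the infinite places, and X the kernel of the degree map on the free abelian group on S. Then the rank of X as a Z-module equals |S| - 1, and the Dirichlet regulator map λ : O_{K,S}^× ⊗ R → X ⊗ R, u ⊗ 1 ↦ Σ_{w ∈ S} log‖u‖_w · w, is an isomorphism of R-vector spaces. -/
noncomputable section

open NumberField IsDedekindDomain

/-- The integer `ord(x)` such that a nonzero value `x` of a discrete valuation is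
`ofAdd (ord x)` (and `0` for `x = 0`). -/
def ordOfValue (x : WithZero (Multiplicative ℤ)) : ℤ :=
  if h : x = 0 then 0 else Multiplicative.toAdd (WithZero.unzero h)

variable (K : Type*) [Field K] [NumberField K]

/-- The set `S` of places of `K`: all infinite places together with a finite set `T` of
finite places (primes of `𝓞 K`). -/
def placesOf (T : Finset (HeightOneSpectrum (𝓞 K))) : Type _ :=
  InfinitePlace K ⊕ {v // v ∈ T}

instance (T : Finset (HeightOneSpectrum (𝓞 K))) : Fintype (placesOf K T) :=
  inferInstanceAs (Fintype (InfinitePlace K ⊕ {v // v ∈ T}))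

/-- The group of `S`-units of `K`: units whose valuation is trivial at every finite
place outside `S`. -/
def sUnits (T : Finset (HeightOneSpectrum (𝓞 K))) : Set Kˣ :=
  {u : Kˣ | ∀ v : HeightOneSpectrum (𝓞 K), v ∉ T → v.valuation K ((u : K)) = 1}

/-- The Dirichlet regulator (logarithmic) map `u ↦ (log‖u‖_w)_{w ∈ S}`, with the
normalised absolute values: `‖u‖_w = w(u)^{mult w}` at an infinite place `w` and
`‖u‖_v = (N v)^{ord_v(u)}` at a finite place `v`. -/
def logMap (T : Finset (HeightOneSpectrum (𝓞 K))) (u : Kˣ) : placesOf K T → ℝ :=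
  fun x => match x with
  | .inl w => (w.mult : ℝ) * Real.log (w (u : K))
  | .inr v => (ordOfValue (v.1.valuation K ((u : K))) : ℝ)
      * Real.log (Ideal.absNorm v.1.asIdeal)

/-- The sum-of-coordinates ("degree") map, with coefficients in `R`. -/
def degreeMap (R : Type*) [CommRing R] (T : Finset (HeightOneSpectrum (𝓞 K))) :
    (placesOf K T → R) →ₗ[R] R :=
  ∑ x : placesOf K T, LinearMap.proj x

/-!
The product formula puts the logarithmic image of the `S`-units into the trace-zero hyperplane.
For each finite place `v ∈ S`, a generator of `v ^ h` (`h` the class number) is an `S`-unit whose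
log vector is supported on the infinite places and `v`, with nonzero `v`-coordinate. Subtracting
multiples of these reduces to trace-zero vectors supported at infinity; restriction to the
infinite places other than a fixed one is injective on those, and there Dirichlet's unit
theorem says that the log vectors of the units of `𝓞 K` span. An `S`-unit with vanishing log
vector has trivial valuation everywhere, so it is a unit of `𝓞 K` of absolute value one at every
infinite place, hence a root of unity. The rank statement is rank-nullity for the surjective
degree map.
-/

theorem ordOfValue_eq_zero_iff {x : WithZero (Multiplicative ℤ)} (hx : x ≠ 0) :
    ordOfValue x = 0 ↔ x = 1 := by
  obtain ⟨m, rfl⟩ := WithZero.ne_zero_iff_exists.mp hx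
  simp only [ordOfValue, WithZero.coe_ne_zero, dite_false, WithZero.unzero_coe, toAdd_eq_zero]
  norm_cast

namespace IsDedekindDomain.HeightOneSpectrum

open scoped nonZeroDivisors

variable {R : Type*} [CommRing R] [IsDedekindDomain R] {L : Type*} [Field L] [Algebra R L]
  [IsFractionRing R L]

theorem valuation_units_eq_one (v : HeightOneSpectrum R) (g : Rˣ) :
    v.valuation L (algebraMap R L g) = 1 :=
  (valuation_eq_one_iff_notMem v).mpr fun h =>
    v.isPrime.ne_top (Ideal.eq_top_of_isUnit_mem _ h g.isUnit)

theorem exists_units_map_eq_of_forall_valuation_eq_one {u : Lˣ}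
    (h : ∀ v : HeightOneSpectrum R, v.valuation L u = 1) :
    ∃ g : Rˣ, Units.map (algebraMap R L).toMonoidHom g = u := by
  obtain ⟨a, ha⟩ := mem_integers_of_valuation_le_one L (u : L) fun v => (h v).le
  obtain ⟨b, hb⟩ := mem_integers_of_valuation_le_one L (u⁻¹ : Lˣ) fun v => by
    rw [Units.val_inv_eq_inv_val, map_inv₀, h v, inv_one]
  have hab : a * b = 1 := IsFractionRing.injective R L <| by simp [ha, hb]
  exact ⟨⟨a, b, hab, mul_comm a b ▸ hab⟩, Units.ext ha⟩

theorem exists_valuation_eq_one_iff_ne [Finite (ClassGroup R)] (v : HeightOneSpectrum R) :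
    ∃ α : Lˣ, ∀ v' : HeightOneSpectrum R, v'.valuation L α = 1 ↔ v' ≠ v := by
  have hv : v.asIdeal ∈ (Ideal R)⁰ := mem_nonZeroDivisors_of_ne_zero v.ne_bot
  have hn : Nat.card (ClassGroup R) ≠ 0 := Nat.card_pos.ne'
  obtain ⟨π, hπ⟩ : (v.asIdeal ^ Nat.card (ClassGroup R)).IsPrincipal := by
    rw [← ClassGroup.mk0_eq_one_iff (pow_mem hv _),
      show (⟨_, pow_mem hv _⟩ : (Ideal R)⁰) = ⟨v.asIdeal, hv⟩ ^ Nat.card (ClassGroup R) from rfl,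
      map_pow, pow_card_eq_one']
  have hπ0 : π ≠ 0 := by
    rintro rfl
    exact pow_ne_zero _ v.ne_bot (by simpa using hπ)
  refine ⟨Units.mk0 (algebraMap R L π)
    ((map_ne_zero_iff _ (IsFractionRing.injective R L)).mpr hπ0), fun v' => ?_⟩
  rw [Units.val_mk0, valuation_eq_one_iff_notMem, ← Ideal.span_singleton_le_iff_mem,
    Ideal.span, ← hπ, Ideal.IsPrime.pow_le_iff hn, not_iff_not]
  exact ⟨fun h => (HeightOneSpectrum.ext (v.isMaximal.eq_of_le v'.isPrime.ne_top h)).symm,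
    fun h => h ▸ le_rfl⟩

end IsDedekindDomain.HeightOneSpectrum

theorem NumberField.FinitePlace.mk_apply_eq_zpow {K : Type*} [Field K] [NumberField K]
    (v : HeightOneSpectrum (𝓞 K)) {x : K} (hx : x ≠ 0) :
    FinitePlace.mk v x = (Ideal.absNorm v.asIdeal : ℝ) ^ ordOfValue (v.valuation K x) := by
  have hv : v.valuation K x ≠ 0 := (Valuation.ne_zero_iff _).mpr hx
  rw [FinitePlace.mk_apply, FinitePlace.norm_embedding', WithZeroMulInt.toNNReal_neg_apply _ hv,
    ordOfValue, dif_neg hv]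
  push_cast
  rfl

section

variable {K} {T : Finset (HeightOneSpectrum (𝓞 K))}

theorem degreeMap_apply (R : Type*) [CommRing R] (f : placesOf K T → R) :
    degreeMap K R T f = ∑ x, f x := by
  simp [degreeMap]

theorem logMap_inl (u : Kˣ) (w : InfinitePlace K) :
    logMap K T u (.inl w) = w.mult * Real.log (w u) := rfl

theorem logMap_inr (u : Kˣ) (v : {v // v ∈ T}) :
    logMap K T u (.inr v) = Real.log (FinitePlace.mk v.1 u) := by
  rw [FinitePlace.mk_apply_eq_zpow _ u.ne_zero, Real.log_zpow]
  rfl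

theorem logMap_pow (u : Kˣ) (n : ℕ) : logMap K T (u ^ n) = n • logMap K T u := by
  funext x
  rw [Pi.smul_apply]
  rcases x with w | v
  · rw [logMap_inl, logMap_inl, Units.val_pow_eq_pow_val, map_pow, Real.log_pow,
      nsmul_eq_mul]
    ring
  · rw [logMap_inr, logMap_inr, Units.val_pow_eq_pow_val, map_pow, Real.log_pow,
      nsmul_eq_mul]

theorem logMap_inl_eq_zero_iff (u : Kˣ) (w : InfinitePlace K) :
    logMap K T u (.inl w) = 0 ↔ w u = 1 := by
  rw [logMap_inl, mul_eq_zero, or_iff_right InfinitePlace.mult_coe_ne_zero, Real.log_eq_zero,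
    or_iff_right ((map_ne_zero w).mpr u.ne_zero), or_iff_left]
  linarith [(apply_nonneg w (u : K))]

theorem logMap_inr_eq_zero_iff (u : Kˣ) (v : {v // v ∈ T}) :
    logMap K T u (.inr v) = 0 ↔ v.1.valuation K u = 1 := by
  have hN : Real.log (Ideal.absNorm v.1.asIdeal) ≠ 0 :=
    (Real.log_pos (mod_cast HeightOneSpectrum.one_lt_absNorm v.1)).ne'
  rw [logMap, mul_eq_zero, or_iff_left hN, Int.cast_eq_zero,
    ordOfValue_eq_zero_iff ((Valuation.ne_zero_iff _).mpr u.ne_zero)]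

theorem finprod_finitePlace_eq_prod {u : Kˣ} (hu : u ∈ sUnits K T) :
    ∏ᶠ w : FinitePlace K, w u = ∏ v : {v // v ∈ T}, FinitePlace.mk v.1 u := by
  rw [← finprod_comp_equiv FinitePlace.equivHeightOneSpectrum.symm,
    finprod_eq_prod_of_mulSupport_subset (s := T), ← Finset.prod_coe_sort T]
  · rfl
  · intro v hv
    by_contra hvT
    apply hv
    show FinitePlace.equivHeightOneSpectrum.symm v u = 1
    rw [FinitePlace.equivHeightOneSpectrum_symm_apply, FinitePlace.norm_embedding', hu v hvT,
      map_one, NNReal.coe_one]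

theorem sum_logMap_eq_zero {u : Kˣ} (hu : u ∈ sUnits K T) : ∑ x, logMap K T u x = 0 := by
  have hinf : ∑ w : InfinitePlace K, logMap K T u (.inl w) =
      Real.log (∏ w : InfinitePlace K, w u ^ w.mult) := by
    rw [Real.log_prod fun w _ => pow_ne_zero _ ((map_ne_zero w).mpr u.ne_zero)]
    simp only [logMap_inl, Real.log_pow]
  have hfin : ∑ v : {v // v ∈ T}, logMap K T u (.inr v) =
      Real.log (∏ᶠ w : FinitePlace K, w u) := by
    rw [finprod_finitePlace_eq_prod hu,
      Real.log_prod fun v _ => (FinitePlace.pos_iff.mpr u.ne_zero).ne']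
    simp only [logMap_inr]
  rw [← Real.log_one, ← prod_abs_eq_one u.ne_zero, Real.log_mul, ← hinf, ← hfin]
  · exact Fintype.sum_sum_type _
  · exact Finset.prod_ne_zero_iff.mpr fun w _ => pow_ne_zero _ ((map_ne_zero w).mpr u.ne_zero)
  · rw [finprod_finitePlace_eq_prod hu]
    exact Finset.prod_ne_zero_iff.mpr fun v _ => (FinitePlace.pos_iff.mpr u.ne_zero).ne'

theorem degreeMap_surjective (R : Type*) [CommRing R] : Function.Surjective (degreeMap K R T) := by
  classical
  obtain ⟨x₀⟩ : Nonempty (placesOf K T) := ⟨.inl (Classical.arbitrary _)⟩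
  intro r
  refine ⟨Pi.single x₀ r, ?_⟩
  simp [degreeMap_apply]

theorem finrank_ker_degreeMap (R : Type*) [CommRing R] [IsDomain R] :
    Module.finrank R (LinearMap.ker (degreeMap K R T)) = Fintype.card (placesOf K T) - 1 := by
  have h := Submodule.finrank_quotient_add_finrank (LinearMap.ker (degreeMap K R T))
  rw [((degreeMap K R T).quotKerEquivOfSurjective (degreeMap_surjective R)).finrank_eq,
    Module.finrank_self, Module.finrank_pi] at h
  omega

theorem logMap_eq_zero_iff_exists_pow_eq_one {u : Kˣ} (hu : u ∈ sUnits K T) :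
    (∀ x, logMap K T u x = 0) ↔ ∃ m : ℕ, m ≠ 0 ∧ u ^ m = 1 := by
  constructor
  · intro h
    obtain ⟨g, rfl⟩ := HeightOneSpectrum.exists_units_map_eq_of_forall_valuation_eq_one fun v => by
      by_cases hv : v ∈ T
      · exact (logMap_inr_eq_zero_iff u ⟨v, hv⟩).mp (h (.inr ⟨v, hv⟩))
      · exact hu v hv
    have hg : g ∈ Units.torsion K :=
      (Units.mem_torsion K).mpr fun w => (logMap_inl_eq_zero_iff _ w).mp (h (.inl w))
    obtain ⟨m, hm, hgm⟩ := isOfFinOrder_iff_pow_eq_one.mp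
      ((Units.map (algebraMap (𝓞 K) K).toMonoidHom).isOfFinOrder hg)
    exact ⟨m, hm.ne', hgm⟩
  · rintro ⟨m, hm, hum⟩ x
    have h0 : logMap K T 1 = 0 := by simpa using logMap_pow (T := T) u 0
    have h := congrFun (logMap_pow (T := T) u m) x
    rw [hum, h0, Pi.smul_apply, Pi.zero_apply, eq_comm, smul_eq_zero] at h
    exact h.resolve_left hm

theorem span_logMap_le_ker_degreeMap :
    Submodule.span ℝ (logMap K T '' sUnits K T) ≤ LinearMap.ker (degreeMap K ℝ T) := by
  rw [Submodule.span_le]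
  rintro _ ⟨u, hu, rfl⟩
  exact LinearMap.mem_ker.mpr ((degreeMap_apply ℝ _).trans (sum_logMap_eq_zero hu))

theorem units_map_mem_sUnits (g : (𝓞 K)ˣ) :
    Units.map (algebraMap (𝓞 K) K).toMonoidHom g ∈ sUnits K T :=
  fun v _ => HeightOneSpectrum.valuation_units_eq_one v g

variable (K T) in
def infiniteHyperplane : Submodule ℝ (placesOf K T → ℝ) :=
  LinearMap.ker ((degreeMap K ℝ T).prod (LinearMap.funLeft ℝ ℝ Sum.inr))

theorem mem_infiniteHyperplane {f : placesOf K T → ℝ} :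
    f ∈ infiniteHyperplane K T ↔ ∑ x, f x = 0 ∧ ∀ v, f (.inr v) = 0 := by
  change (degreeMap K ℝ T f, fun v => f (.inr v)) = 0 ↔ _
  rw [Prod.mk_eq_zero, degreeMap_apply, funext_iff]
  rfl

theorem logMap_units_mem_infiniteHyperplane (g : (𝓞 K)ˣ) :
    logMap K T (Units.map (algebraMap (𝓞 K) K).toMonoidHom g) ∈ infiniteHyperplane K T :=
  mem_infiniteHyperplane.mpr ⟨sum_logMap_eq_zero (units_map_mem_sUnits g),
    fun v => (logMap_inr_eq_zero_iff _ v).mpr (HeightOneSpectrum.valuation_units_eq_one v.1 g)⟩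

theorem eq_zero_of_mem_infiniteHyperplane {f : placesOf K T → ℝ} (hf : f ∈ infiniteHyperplane K T)
    (w₀ : InfinitePlace K) (h : ∀ w ≠ w₀, f (.inl w) = 0) : f = 0 := by
  obtain ⟨hsum, hinr⟩ := mem_infiniteHyperplane.mp hf
  have hzero : ∀ x, x ≠ .inl w₀ → f x = 0 := by
    rintro (w | v) hx
    · exact h w fun hw => hx (hw ▸ rfl)
    · exact hinr v
  have hw₀ : f (.inl w₀) = 0 := by rwa [Fintype.sum_eq_single _ hzero] at hsum
  funext x
  by_cases hx : x = .inl w₀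
  · rw [hx, hw₀]
    rfl
  · exact hzero x hx

open NumberField.Units dirichletUnitTheorem in
theorem infiniteHyperplane_le_span :
    infiniteHyperplane K T ≤ Submodule.span ℝ (logMap K T '' sUnits K T) := by
  let Φ : (placesOf K T → ℝ) →ₗ[ℝ] logSpace K := LinearMap.funLeft ℝ ℝ fun w => Sum.inl w.1
  let U := infiniteHyperplane K T ⊓ Submodule.span ℝ (logMap K T '' sUnits K T)
  have hΦ : Submodule.map Φ U = ⊤ := by
    rw [eq_top_iff, ← unitLattice_span_eq_top, Submodule.span_le]
    rintro _ ⟨x, -, rfl⟩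
    exact ⟨_, ⟨logMap_units_mem_infiniteHyperplane x.toMul,
      Submodule.subset_span ⟨_, units_map_mem_sUnits x.toMul, rfl⟩⟩, rfl⟩
  intro f hf
  obtain ⟨p, hpU, hp⟩ := hΦ.ge (Submodule.mem_top (x := Φ f))
  have hfp : f - p = 0 := eq_zero_of_mem_infiniteHyperplane (sub_mem hf hpU.1) w₀ fun w hw =>
    sub_eq_zero.mpr (congrFun hp ⟨w, hw⟩).symm
  rw [sub_eq_zero.mp hfp]
  exact hpU.2

theorem exists_sUnit_logMap_inr_eq_zero_iff (v : {v // v ∈ T}) :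
    ∃ α ∈ sUnits K T, ∀ v', logMap K T α (.inr v') = 0 ↔ v' ≠ v := by
  obtain ⟨α, hα⟩ := HeightOneSpectrum.exists_valuation_eq_one_iff_ne (L := K) v.1
  refine ⟨α, fun v' hv' => (hα v').mpr (by rintro rfl; exact hv' v.2), fun v' => ?_⟩
  rw [logMap_inr_eq_zero_iff, hα, Ne, Ne, Subtype.ext_iff]

theorem exists_mem_span_sub_mem_infiniteHyperplane {f : placesOf K T → ℝ}
    (hf : f ∈ LinearMap.ker (degreeMap K ℝ T)) :
    ∃ p ∈ Submodule.span ℝ (logMap K T '' sUnits K T), f - p ∈ infiniteHyperplane K T := by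
  choose α hαS hα using exists_sUnit_logMap_inr_eq_zero_iff (K := K) (T := T)
  let c v := f (.inr v) / logMap K T (α v) (.inr v)
  have hp : ∑ v, c v • logMap K T (α v) ∈ Submodule.span ℝ (logMap K T '' sUnits K T) :=
    Submodule.sum_mem _ fun v _ => Submodule.smul_mem _ _ (Submodule.subset_span ⟨α v, hαS v, rfl⟩)
  refine ⟨_, hp, mem_infiniteHyperplane.mpr ⟨?_, fun v => ?_⟩⟩
  · rw [← degreeMap_apply, ← LinearMap.mem_ker]
    exact sub_mem hf (span_logMap_le_ker_degreeMap hp)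
  · have hcoord (x : placesOf K T) : (f - ∑ v, c v • logMap K T (α v)) x =
        f x - ∑ b, c b * logMap K T (α b) x := by
      simp only [Pi.sub_apply, Finset.sum_apply, Pi.smul_apply, smul_eq_mul]
    refine (hcoord (.inr v)).trans ?_
    rw [Finset.sum_eq_single v (fun b _ hb => by rw [(hα b v).mpr (Ne.symm hb), mul_zero])
      (by simp), div_mul_cancel₀ _ fun h => (hα v v).mp h rfl, sub_self]

theorem span_logMap_eq_ker_degreeMap :
    Submodule.span ℝ (logMap K T '' sUnits K T) = LinearMap.ker (degreeMap K ℝ T) := by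
  refine le_antisymm span_logMap_le_ker_degreeMap fun f hf => ?_
  obtain ⟨p, hp, hfp⟩ := exists_mem_span_sub_mem_infiniteHyperplane hf
  simpa using add_mem (infiniteHyperplane_le_span hfp) hp

end

/-- **`S`-unit theorem in regulator form.** Let `K` be a number field and
`S` a finite set of places containing the infinite ones (the infinite places together
with a finite set `T` of primes).  Let `X = ker(deg : ℤ[S] → ℤ)`.  Then
`rank_ℤ X = |S| − 1`, and the Dirichlet regulator map
`λ : O_{K,S}^× ⊗ ℝ → X ⊗ ℝ`, `u ↦ Σ_w log‖u‖_w · w`, is an isomorphism of real vector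
spaces: the image of the `S`-units lands in the trace-zero hyperplane (product formula),
spans it over `ℝ`, and the kernel of `λ` consists exactly of the roots of unity. -/
theorem stmt10 (T : Finset (HeightOneSpectrum (𝓞 K))) :
    Module.finrank ℤ (LinearMap.ker (degreeMap K ℤ T)) = Fintype.card (placesOf K T) - 1 ∧
    (∀ u ∈ sUnits K T, ∑ x : placesOf K T, logMap K T u x = 0) ∧
    Submodule.span ℝ (logMap K T '' sUnits K T) = LinearMap.ker (degreeMap K ℝ T) ∧
    (∀ u ∈ sUnits K T, ((∀ x, logMap K T u x = 0) ↔ ∃ m : ℕ, m ≠ 0 ∧ u ^ m = 1)) :=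
  ⟨finrank_ker_degreeMap ℤ, fun _ hu => sum_logMap_eq_zero hu, span_logMap_eq_ker_degreeMap,
    fun _ hu => logMap_eq_zero_iff_exists_pow_eq_one hu⟩

end
end
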